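/- For all real $u, w$ and real $p \ge 2$, $\left| |u+w|^{p-1}(u+w) - |u|^{p-1}u - p|u|^{p-1}w \right| \le C(p)(1+|u|^{p-1})(|w|^{p+1} + |w|^2)$ for some constant $C(p)$ depending only on $p$. -/

import Mathlib

open Real Set

/-!
`F(x) = |x| ^ (p - 1) * x` is `C¹` with `F' = p * |x| ^ (p - 1)`, and on `[-M, M]` the map
`x ↦ |x| ^ (p - 1)` is Lipschitz with constant `(p - 1) * M ^ (p - 2)` since `p ≥ 2`. The mean
value inequality for `F(x) - F'(u) * x` on the segment from `u` to `u + w` thus bounds the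
remainder by `p (p - 1) (|u| + |w|) ^ (p - 2) * w²`. Splitting
`(|u| + |w|) ^ (p - 2) ≤ 2 ^ (p - 2) (|u| ^ (p - 2) + |w| ^ (p - 2))` and using
`x ^ (p - 2) ≤ 1 + x ^ (p - 1)` gives the claim with `C = p (p - 1) 2 ^ (p - 1)`.
-/

lemma add_rpow_le_two_rpow_mul_rpow_add_rpow {a b r : ℝ} (ha : 0 ≤ a) (hb : 0 ≤ b) (hr : 0 ≤ r) :
    (a + b) ^ r ≤ 2 ^ r * (a ^ r + b ^ r) := calc
  (a + b) ^ r ≤ (2 * max a b) ^ r := by gcongr; linarith [le_max_left a b, le_max_right a b]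
  _ = 2 ^ r * max a b ^ r := mul_rpow zero_le_two (le_max_of_le_left ha)
  _ ≤ 2 ^ r * (a ^ r + b ^ r) := by
    gcongr
    rcases le_total a b with h | h
    · rw [max_eq_right h]; exact le_add_of_nonneg_left (by positivity)
    · rw [max_eq_left h]; exact le_add_of_nonneg_right (by positivity)

lemma rpow_le_one_add_rpow {x a b : ℝ} (hx : 0 ≤ x) (ha : 0 ≤ a) (hab : a ≤ b) :
    x ^ a ≤ 1 + x ^ b := by
  rcases le_total x 1 with h | h
  · linarith [rpow_le_one hx h ha, rpow_nonneg hx b]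
  · linarith [rpow_le_rpow_of_exponent_le h hab]

lemma abs_rpow_sub_rpow_le {q M a b : ℝ} (hq : 1 ≤ q) (ha : a ∈ Icc 0 M) (hb : b ∈ Icc 0 M) :
    |a ^ q - b ^ q| ≤ q * M ^ (q - 1) * |a - b| := by
  refine (convex_Icc 0 M).norm_image_sub_le_of_norm_hasDerivWithin_le (f := (· ^ q))
    (fun x _ => (hasDerivAt_rpow_const (Or.inr hq)).hasDerivWithinAt) (fun x hx => ?_) hb ha
  have hx0 := hx.1
  rw [norm_of_nonneg (by positivity)]
  gcongr
  exact hx.2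

lemma hasDerivAt_abs_rpow_mul_self {q : ℝ} (hq : 0 < q) (x : ℝ) :
    HasDerivAt (fun y => |y| ^ q * y) ((q + 1) * |x| ^ q) x := by
  -- `|·|` is not differentiable at `0`; there the derivative is obtained by continuous extension.
  have hcont : Continuous fun y : ℝ => |y| ^ q := continuous_abs.rpow_const fun _ => Or.inr hq.le
  refine hasDerivAt_of_hasDerivAt_of_ne' (g := fun y => (q + 1) * |y| ^ q) (x := 0)
    (fun y hy => ?_) (hcont.mul continuous_id).continuousAt
    (continuous_const.mul hcont).continuousAt x
  refine (((hasDerivAt_abs hy).rpow_const (Or.inl (abs_ne_zero.2 hy))).mul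
    (hasDerivAt_id y)).congr_deriv ?_
  have hpow : |y| ^ (q - 1) * |y| = |y| ^ q := by
    rw [← rpow_add_one (abs_ne_zero.2 hy), sub_add_cancel]
  rw [id]
  linear_combination q * |y| ^ (q - 1) * sign_mul_self y + q * hpow

lemma abs_rpow_mul_self_taylor_le {p : ℝ} (hp : 2 ≤ p) (u w : ℝ) :
    |(|u + w| ^ (p - 1) * (u + w) - |u| ^ (p - 1) * u - p * |u| ^ (p - 1) * w)| ≤
      p * (p - 1) * (|u| + |w|) ^ (p - 2) * |w| ^ 2 := by
  have hderiv (x : ℝ) : HasDerivAt (fun y => |y| ^ (p - 1) * y - p * |u| ^ (p - 1) * y)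
      (p * |x| ^ (p - 1) - p * |u| ^ (p - 1)) x := by
    have hF := hasDerivAt_abs_rpow_mul_self (q := p - 1) (by linarith) x
    rw [sub_add_cancel] at hF
    exact (hF.sub ((hasDerivAt_id' x).const_mul (p * |u| ^ (p - 1)))).congr_deriv (by ring)
  have hbound (x : ℝ) (hx : x ∈ uIcc u (u + w)) :
      ‖p * |x| ^ (p - 1) - p * |u| ^ (p - 1)‖ ≤ p * (p - 1) * (|u| + |w|) ^ (p - 2) * |w| := by
    have hxu : |x - u| ≤ |w| := by simpa using abs_sub_left_of_mem_uIcc hx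
    have hx : |x| ∈ Icc 0 (|u| + |w|) := ⟨abs_nonneg x, by
      linarith [abs_sub_abs_le_abs_sub x u]⟩
    have hu : |u| ∈ Icc 0 (|u| + |w|) := ⟨abs_nonneg u, le_add_of_nonneg_right (abs_nonneg w)⟩
    calc ‖p * |x| ^ (p - 1) - p * |u| ^ (p - 1)‖ = p * |(|x| ^ (p - 1) - |u| ^ (p - 1))| := by
          rw [← mul_sub, norm_mul, norm_of_nonneg (by linarith), norm_eq_abs]
      _ ≤ p * ((p - 1) * (|u| + |w|) ^ (p - 1 - 1) * |(|x| - |u|)|) := by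
          gcongr; exact abs_rpow_sub_rpow_le (by linarith) hx hu
      _ ≤ p * (p - 1) * (|u| + |w|) ^ (p - 2) * |w| := by
          rw [show p - 1 - 1 = p - 2 by ring, ← mul_assoc, ← mul_assoc]
          exact mul_le_mul_of_nonneg_left ((abs_abs_sub_abs_le_abs_sub x u).trans hxu)
            (mul_nonneg (mul_nonneg (by linarith) (by linarith)) (by positivity))
  calc _ = ‖(|u + w| ^ (p - 1) * (u + w) - p * |u| ^ (p - 1) * (u + w))
          - (|u| ^ (p - 1) * u - p * |u| ^ (p - 1) * u)‖ := by
        rw [norm_eq_abs]; ring_nf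
    _ ≤ p * (p - 1) * (|u| + |w|) ^ (p - 2) * |w| * ‖u + w - u‖ :=
        (convex_uIcc u (u + w)).norm_image_sub_le_of_norm_hasDerivWithin_le
          (fun x _ => (hderiv x).hasDerivWithinAt) hbound left_mem_uIcc right_mem_uIcc
    _ = p * (p - 1) * (|u| + |w|) ^ (p - 2) * |w| ^ 2 := by
        rw [add_sub_cancel_left, norm_eq_abs]; ring

/-- For all real `u, w` and `p ≥ 2`,
`||u+w|^{p-1}(u+w) - |u|^{p-1}u - p|u|^{p-1}w| ≤ C(p)(1+|u|^{p-1})(|w|^{p+1}+|w|²)`. -/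
theorem stmt_6 (p : ℝ) (hp : 2 ≤ p) :
    ∃ C > (0:ℝ), ∀ u w : ℝ,
      abs (|u + w| ^ (p - 1) * (u + w) - |u| ^ (p - 1) * u - p * |u| ^ (p - 1) * w) ≤
        C * (1 + |u| ^ (p - 1)) * (|w| ^ (p + 1) + |w| ^ 2) := by
  have hpp : 0 < p * (p - 1) := mul_pos (by linarith) (by linarith)
  set K := p * (p - 1) * 2 ^ (p - 2)
  have hK : 0 < K := by positivity
  refine ⟨2 * K, by positivity, fun u w => ?_⟩
  have hw : |w| ^ (p - 1) * |w| ^ 2 = |w| ^ (p + 1) := by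
    rw [← rpow_natCast, ← rpow_add' (abs_nonneg w) (by norm_num; linarith)]
    congr 1; push_cast; ring
  have hA : 1 ≤ 1 + |u| ^ (p - 1) := le_add_of_nonneg_right (by positivity)
  have hB : |w| ^ 2 ≤ |w| ^ (p + 1) + |w| ^ 2 := le_add_of_nonneg_left (by positivity)
  calc _ ≤ p * (p - 1) * (|u| + |w|) ^ (p - 2) * |w| ^ 2 := abs_rpow_mul_self_taylor_le hp u w
    _ ≤ p * (p - 1) * (2 ^ (p - 2) * (|u| ^ (p - 2) + |w| ^ (p - 2))) * |w| ^ 2 := by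
        gcongr
        exact add_rpow_le_two_rpow_mul_rpow_add_rpow (abs_nonneg u) (abs_nonneg w) (by linarith)
    _ ≤ p * (p - 1) * (2 ^ (p - 2) * ((1 + |u| ^ (p - 1)) + (1 + |w| ^ (p - 1)))) * |w| ^ 2 := by
        gcongr <;> exact rpow_le_one_add_rpow (abs_nonneg _) (by linarith) (by linarith)
    _ = K * ((1 + |u| ^ (p - 1)) * |w| ^ 2 + (|w| ^ (p + 1) + |w| ^ 2)) := by
        rw [← hw]; ring
    _ ≤ K * ((1 + |u| ^ (p - 1)) * (|w| ^ (p + 1) + |w| ^ 2)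
          + (1 + |u| ^ (p - 1)) * (|w| ^ (p + 1) + |w| ^ 2)) := by
        gcongr
        exact le_mul_of_one_le_left (by positivity) hA
    _ = 2 * K * (1 + |u| ^ (p - 1)) * (|w| ^ (p + 1) + |w| ^ 2) := by ring
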